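/- Let γ be the growth function of the Mealy automaton A₆, and let Φ be the Fibonacci sequence with Φ₀ = Φ₁ = 1 and Φ_n = Φ_{n−1} + Φ_{n−2}. Then for every integer n ≥ 1: if n is even, γ(n) = Φ_{⌊n/2⌋+6} + Φ_{⌊n/2⌋+4} − 2n − 18, and if n is odd, γ(n) = Φ_{⌊n/2⌋+6} + 2·Φ_{⌊n/2⌋+4} − 2n − 18. In particular γ has exponential growth order. -/

import Mathlib

/-- The sequence of states visited by a Mealy automaton with transition function `tr`,
started at state `q`, while reading the infinite word `u`. -/
def stateSeq {X Q : Type*} (tr : X → Q → Q) (q : Q) (u : ℕ → X) : ℕ → Q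
  | 0 => q
  | k + 1 => tr (u k) (stateSeq tr q u k)

/-- The automatic transformation of infinite words defined by the Mealy automaton with
transition function `tr` and output function `out` at the state `q`. -/
def autTrans {X Q : Type*} (tr : X → Q → Q) (out : X → Q → X) (q : Q) (u : ℕ → X) : ℕ → X :=
  fun n => out (u n) (stateSeq tr q u n)

/-- The transformation given by a word of states: the product (composition, applied from
right to left) of the corresponding automatic transformations. -/
def wordTrans {X Q : Type*} (tr : X → Q → Q) (out : X → Q → X) (w : List Q) :
    (ℕ → X) → (ℕ → X) :=
  (w.map (autTrans tr out)).foldr (· ∘ ·) id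

/-- The growth function of a Mealy automaton: `growth tr out n` is the number of distinct
transformations of infinite words obtained as compositions of exactly `n` automatic
transformations of the automaton. -/
noncomputable def growth {X Q : Type*} (tr : X → Q → Q) (out : X → Q → X) (n : ℕ) : ℕ :=
  Set.ncard { g : (ℕ → X) → (ℕ → X) | ∃ w : List Q, w.length = n ∧ wordTrans tr out w = g }

/-- The `i`-th finite difference of a function `γ`. -/
def fdiff (γ : ℕ → ℤ) : ℕ → ℕ → ℤ
  | 0, n => γ n
  | i + 1, n => fdiff γ i n - fdiff γ i (n - 1)

/-- Output function of the automaton `A₆`: at `q0` the output negates each letter; at `q1`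
it is the identity; at `q2` it sends both letters to `x0`. -/
def a6Out : Fin 2 → Fin 3 → Fin 2 := fun x q =>
  if q = 0 then (if x = 0 then 1 else 0)
  else if q = 1 then x else 0

/-- Transition function of the automaton `A₆`: both transitions from `q0` stay at `q0`;
from `q1` and `q2` the transition goes to `q1` on reading `x0` and to `q2` on reading
`x1`. -/
def a6Tr : Fin 2 → Fin 3 → Fin 3 := fun x q =>
  if q = 0 then 0 else (if x = 0 then 1 else 2)

/-- The Fibonacci sequence `Φ` with `Φ₀ = Φ₁ = 1` and `Φ_n = Φ_{n−1} + Φ_{n−2}`. -/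
def Phi : ℕ → ℕ
  | 0 => 1
  | 1 => 1
  | n + 2 => Phi (n + 1) + Phi n

/-! Every composition of the generators acts on infinite words either as the identity or the
letterwise negation, or in a normal form: the first `k` output letters are functions of the first
input letter alone, and the output letter at position `k + m` is `T (u m) (u (m + 1))` for one of
the four two-letter rules `¬x ∧ y`, `x ∧ ¬y` and their negations. Composing with a generator on
the left rewrites a normal form explicitly. The forms produced by words of length `n` are exactly
those whose head satisfies a local compatibility condition between consecutive letters and whose
length satisfies `2k + c_T ≤ n + 1` for a constant `c_T ∈ {0, 1, 2}`; distinct forms give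
distinct transformations. Compatible heads of length `k` number `Φ (k + 2) - 1`, by the transfer
recursion on their first letter, and summing over `k` and the four rules gives the formula. -/

namespace A6

open Finset

-- A head letter: a map `Fin 2 → Fin 2`, applied to the first input letter.
inductive HeadFn
  | zero | one | pos | neg
  deriving DecidableEq

-- `rise x y = ¬x ∧ y` is the output rule of `q1` and `q2` at every position but the first.
inductive TailFn
  | rise | fall | notRise | notFall
  deriving DecidableEq

instance : Fintype HeadFn := ⟨{.zero, .one, .pos, .neg}, fun v => by cases v <;> decide⟩

instance : Fintype TailFn :=
  ⟨{.rise, .fall, .notRise, .notFall}, fun T => by cases T <;> decide⟩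

namespace TailFn

def eval : TailFn → Fin 2 → Fin 2 → Fin 2
  | rise, x, y => if x = 0 then y else 0
  | fall, x, y => if y = 0 then x else 0
  | notRise, x, y => (if x = 0 then y else 0).rev
  | notFall, x, y => (if y = 0 then x else 0).rev

def negated : TailFn → Bool
  | rise | fall => false
  | notRise | notFall => true

def not : TailFn → TailFn
  | rise => notRise | fall => notFall | notRise => rise | notFall => fall

def unneg : TailFn → TailFn
  | notRise => rise | notFall => fall | T => T

-- `NF.mk β T` is produced by words of length `n` iff `2 * β.length + T.cost ≤ n + 1`.
def cost : TailFn → ℕ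
  | rise => 0 | fall => 1 | notRise => 1 | notFall => 2

def maxHead (T : TailFn) (n : ℕ) : ℕ := (n + 1 - T.cost) / 2

end TailFn

namespace HeadFn

def eval : HeadFn → Fin 2 → Fin 2
  | zero, _ => 0 | one, _ => 1 | pos, x => x | neg, x => x.rev

def ofFun (f : Fin 2 → Fin 2) : HeadFn :=
  if f 0 = 0 then (if f 1 = 0 then zero else pos) else (if f 1 = 0 then neg else one)

theorem eval_ofFun (f : Fin 2 → Fin 2) (x : Fin 2) : (ofFun f).eval x = f x := by
  unfold ofFun
  fin_cases x <;> split_ifs <;> simp_all [eval] <;> omega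

def not (v : HeadFn) : HeadFn := ofFun fun x => (v.eval x).rev

def rise (a b : HeadFn) : HeadFn := ofFun fun x => TailFn.rise.eval (a.eval x) (b.eval x)

def out (q : Fin 3) (v : HeadFn) : HeadFn := ofFun fun x => a6Out (v.eval x) q

theorem eval_not (v : HeadFn) (x : Fin 2) : v.not.eval x = (v.eval x).rev := eval_ofFun _ x

theorem eval_rise (a b : HeadFn) (x : Fin 2) :
    (a.rise b).eval x = TailFn.rise.eval (a.eval x) (b.eval x) := eval_ofFun _ x

theorem eval_out (q : Fin 3) (v : HeadFn) (x : Fin 2) : (v.out q).eval x = a6Out (v.eval x) q :=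
  eval_ofFun _ x

theorem not_involutive : Function.Involutive HeadFn.not := fun v => by cases v <;> rfl

theorem out_eq_or {q : Fin 3} (hq : q ≠ 0) (v : HeadFn) : v.out q = v ∨ v.out q = .zero := by
  revert q v; decide

theorem out_one (v : HeadFn) : v.out 1 = v := by cases v <;> rfl

theorem eval_injective : Function.Injective HeadFn.eval := by
  intro v w h
  have hv : ∀ v : HeadFn, ofFun v.eval = v := by decide
  rw [← hv v, ← hv w, h]

theorem sum_univ (f : HeadFn → ℕ) : ∑ v, f v = f .zero + f .one + f .pos + f .neg := by
  simp [Finset.univ, Fintype.elems, add_assoc]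

end HeadFn

namespace TailFn

-- Used when `T` is negated and `T.final v`; then the second letter does not matter, so `0` is
-- an arbitrary choice.
def boundary (T : TailFn) (v : HeadFn) : HeadFn :=
  .ofFun fun x => rise.eval (v.eval x) (T.eval x 0)

def absorbing (T : TailFn) : HeadFn := if T.negated then .one else .zero

def compat (T : TailFn) (a b : HeadFn) : Bool := a == T.absorbing || b == a.not

def final : TailFn → HeadFn → Bool
  | rise, v => v == .zero || v == .pos
  | fall, v => v == .zero || v == .neg
  | notRise, v => v == .one || v == .neg
  | notFall, v => v == .one || v == .pos

theorem eval_not (T : TailFn) (x y : Fin 2) : T.not.eval x y = (T.eval x y).rev := by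
  revert T x y; decide

theorem rise_rev_rev (x y : Fin 2) : rise.eval x.rev y.rev = fall.eval x y := by
  revert x y; decide

theorem eval_injective : Function.Injective TailFn.eval := by
  intro T T' h
  have : ∀ T T' : TailFn, (∀ x y, T.eval x y = T'.eval x y) → T = T' := by decide
  exact this T T' fun x y => by rw [h]

theorem exists_eval_ne_right (T : TailFn) : ∃ x, T.eval x 0 ≠ T.eval x 1 := by
  revert T; decide

theorem exists_eval_ne_left (T : TailFn) : ∃ y, T.eval 0 y ≠ T.eval 1 y := by
  revert T; decide

theorem not_not (T : TailFn) : T.not.not = T := by cases T <;> rfl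

theorem negated_unneg (T : TailFn) : T.unneg.negated = false := by cases T <;> rfl

theorem negated_not (T : TailFn) : T.not.negated = !T.negated := by cases T <;> rfl

theorem unneg_not {T : TailFn} (hT : T.negated = false) : T.not.unneg = T := by
  revert T; decide

theorem cost_not_le (T : TailFn) : T.not.cost ≤ T.cost + 1 := by cases T <;> decide

theorem cost_unneg {T : TailFn} (hT : T.negated = true) : T.unneg.cost + 1 = T.cost := by
  revert T; decide

theorem cost_not_of_negated {T : TailFn} (hT : T.negated = true) : T.not.cost + 1 = T.cost := by
  revert T; decide

theorem sum_univ (f : TailFn → ℕ) :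
    ∑ T, f T = f .rise + f .fall + f .notRise + f .notFall := by
  simp [Finset.univ, Fintype.elems, add_assoc]

theorem compat_absorbing (T : TailFn) (b : HeadFn) : T.compat T.absorbing b = true := by
  simp [TailFn.compat]

theorem absorbing_eq_or (T : TailFn) : T.absorbing = .zero ∨ T.absorbing = .one := by
  cases T <;> simp [TailFn.absorbing, TailFn.negated]

theorem filter_compat_of_ne {T : TailFn} {v : HeadFn} (hv : v ≠ T.absorbing) :
    univ.filter (T.compat v ·) = {v.not} := by
  revert T v; decide

theorem compat_zero {T : TailFn} (hT : T.negated = false) (b : HeadFn) : T.compat .zero b := by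
  revert T b; decide

theorem final_zero {T : TailFn} (hT : T.negated = false) : T.final .zero := by
  revert T; decide

theorem compat_not (T : TailFn) (a b : HeadFn) : T.not.compat a.not b.not = T.compat a b := by
  revert T a b; decide

theorem final_not (T : TailFn) (v : HeadFn) : T.not.final v.not = T.final v := by
  revert T v; decide

theorem rise_eq_of_compat {T : TailFn} (hT : T.negated = false) {a b : HeadFn}
    (h : T.compat a b = true) : a.rise b = b := by
  revert T a b; decide

theorem rise_eval_final {T : TailFn} (hT : T.negated = false) {v : HeadFn}
    (h : T.final v = true) (x y : Fin 2) : rise.eval (v.eval x) (T.eval x y) = T.eval x y := by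
  revert T v x y; decide

theorem rise_eval_eval {T : TailFn} (hT : T.negated = false) (x y z : Fin 2) :
    rise.eval (T.eval x y) (T.eval y z) = T.eval y z := by
  revert T x y z; decide

theorem rise_eval_final_of_negated {T : TailFn} (hT : T.negated = true) {v : HeadFn}
    (h : T.final v = true) (x y : Fin 2) :
    rise.eval (v.eval x) (T.eval x y) = (T.boundary v).eval x := by
  revert T v x y; decide

theorem rise_eval_eval_of_negated {T : TailFn} (hT : T.negated = true) (x y z : Fin 2) :
    rise.eval (T.eval x y) (T.eval y z) = T.unneg.eval x y := by
  revert T x y z; decide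

theorem rise_eq_or_of_compat {T : TailFn} (hT : T.negated = true) {a b : HeadFn}
    (h : T.compat a b = true) : a.rise b = b ∨ a.rise b = .zero := by
  revert T a b; decide

theorem unneg_compat_rise {T : TailFn} (hT : T.negated = true) {a b : HeadFn}
    (h : T.compat a b = true) : T.unneg.compat a (a.rise b) := by
  revert T a b; decide

theorem unneg_final_boundary {T : TailFn} (hT : T.negated = true) {v : HeadFn}
    (h : T.final v = true) :
    T.unneg.final (T.boundary v) ∧ T.unneg.compat v (T.boundary v) := by
  revert T v; decide

theorem not_rise_not_of_compat {T : TailFn} (hT : T.negated = false) {a b : HeadFn}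
    (h : T.compat a b = true) : a.not.rise b.not = a := by
  revert T a b; decide

theorem boundary_not_not_of_final {T : TailFn} (hT : T.negated = false) {v : HeadFn}
    (h : T.final v = true) : T.not.boundary v.not = v := by
  revert T v; decide

theorem exists_out_not_eq_of_compat {T : TailFn} (hT : T.negated = false) {a b : HeadFn}
    (h : T.compat a b = true) : ∃ q : Fin 3, q ≠ 0 ∧ b.not.out q = a := by
  revert T a b; decide

end TailFn

def Valid (T : TailFn) : List HeadFn → Prop
  | [] => False
  | [v] => T.final v = true
  | a :: b :: l => T.compat a b = true ∧ Valid T (b :: l)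

def riseHeads (T : TailFn) : HeadFn → List HeadFn → List HeadFn
  | p, [] => [T.boundary p]
  | p, x :: l => HeadFn.rise p x :: riseHeads T x l

inductive NF
  | flip (b : Bool)
  | mk (head : List HeadFn) (tail : TailFn)
  deriving DecidableEq

namespace NF

def eval : NF → (ℕ → Fin 2) → ℕ → Fin 2
  | flip b, u, n => if b then (u n).rev else u n
  | mk β T, u, n =>
    if n < β.length then (β.getD n .zero).eval (u 0)
    else T.eval (u (n - β.length)) (u (n - β.length + 1))

def lmul (q : Fin 3) : NF → NF
  | flip b =>
    if q = 0 then flip !b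
    else mk [.out q (if b then .neg else .pos)] (if b then .fall else .rise)
  | mk β T =>
    if q = 0 then mk (β.map HeadFn.not) T.not
    else match β with
      | [] => mk [] T
      | v :: l =>
        if T.negated then mk (.out q v :: riseHeads T v l) T.unneg
        -- for valid heads, `rise` fixes every letter after the first (`rise_eq_of_compat`)
        else mk (.out q v :: l) T

def Admissible (n : ℕ) : NF → Prop
  | flip b => b = n.bodd
  | mk β T => Valid T β ∧ 2 * β.length + T.cost ≤ n + 1

end NF

def nf (w : List (Fin 3)) : NF := w.foldr NF.lmul (.flip false)

theorem stateSeq_a6Tr_zero (u : ℕ → Fin 2) (n : ℕ) : stateSeq a6Tr 0 u n = 0 := by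
  induction n with
  | zero => rfl
  | succ n ih => simp [stateSeq, ih, a6Tr]

theorem stateSeq_a6Tr_ne_zero {q : Fin 3} (hq : q ≠ 0) (u : ℕ → Fin 2) (n : ℕ) :
    stateSeq a6Tr q u n ≠ 0 := by
  induction n with
  | zero => exact hq
  | succ n ih =>
    simp only [stateSeq, a6Tr, if_neg ih]
    split <;> decide

theorem autTrans_a6_zero_apply (u : ℕ → Fin 2) (n : ℕ) :
    autTrans a6Tr a6Out 0 u n = (u n).rev := by
  simp only [autTrans, stateSeq_a6Tr_zero, a6Out, if_true]
  generalize u n = x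
  revert x; decide

theorem autTrans_a6_apply_succ {q : Fin 3} (hq : q ≠ 0) (u : ℕ → Fin 2) (n : ℕ) :
    autTrans a6Tr a6Out q u (n + 1) = TailFn.rise.eval (u n) (u (n + 1)) := by
  simp only [autTrans, stateSeq, a6Tr, if_neg (stateSeq_a6Tr_ne_zero hq u n)]
  generalize u n = x; generalize u (n + 1) = y
  revert x y; decide

theorem autTrans_a6_comp_eq {q : Fin 3} (hq : q ≠ 0) {g g' : (ℕ → Fin 2) → ℕ → Fin 2}
    (h0 : ∀ u, g' u 0 = a6Out (g u 0) q)
    (hs : ∀ u n, g' u (n + 1) = TailFn.rise.eval (g u n) (g u (n + 1))) :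
    autTrans a6Tr a6Out q ∘ g = g' := by
  funext u n
  cases n with
  | zero => exact (h0 u).symm
  | succ n => exact (autTrans_a6_apply_succ hq _ n).trans (hs u n).symm

@[simp]
theorem valid_cons_cons {T : TailFn} {a b : HeadFn} {l : List HeadFn} :
    Valid T (a :: b :: l) ↔ T.compat a b = true ∧ Valid T (b :: l) := Iff.rfl

@[simp]
theorem valid_singleton {T : TailFn} {v : HeadFn} : Valid T [v] ↔ T.final v = true := Iff.rfl

theorem Valid.length_pos {T : TailFn} {β : List HeadFn} (h : Valid T β) : 0 < β.length := by
  cases β with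
  | nil => exact h.elim
  | cons => simp

theorem Valid.compat_getD {T : TailFn} {β : List HeadFn} (h : Valid T β) {i : ℕ}
    (hi : i + 1 < β.length) : T.compat (β.getD i .zero) (β.getD (i + 1) .zero) = true := by
  induction β generalizing i with
  | nil => simp at hi
  | cons a l ih =>
    match l, i, h with
    | b :: l, 0, h => exact h.1
    | b :: l, i + 1, h => exact ih h.2 (by simpa using hi)

theorem Valid.final_getD {T : TailFn} {v : HeadFn} {l : List HeadFn} (h : Valid T (v :: l)) :
    T.final ((v :: l).getD l.length .zero) = true := by
  induction l generalizing v with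
  | nil => exact h
  | cons b l ih => exact ih h.2

theorem Valid.map_not {T : TailFn} {β : List HeadFn} (h : Valid T β) :
    Valid T.not (β.map HeadFn.not) := by
  induction β with
  | nil => exact h.elim
  | cons a l ih =>
    match l, h with
    | [], h => simpa [Valid, TailFn.final_not] using h
    | b :: l, h => exact ⟨by simpa [TailFn.compat_not] using h.1, ih h.2⟩

theorem Valid.cons_of_not_negated {T : TailFn} (hT : T.negated = false) {v w : HeadFn}
    {l : List HeadFn} (h : Valid T (v :: l)) (hw : w = v ∨ w = .zero) : Valid T (w :: l) := by
  rcases hw with rfl | rfl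
  · exact h
  · match l, h with
    | [], _ => exact TailFn.final_zero hT
    | _ :: _, h => exact ⟨TailFn.compat_zero hT _, h.2⟩

theorem Valid.cons_riseHeads {T : TailFn} (hT : T.negated = true) {v w : HeadFn} {l : List HeadFn}
    (h : Valid T (v :: l)) (hw : w = v ∨ w = .zero) :
    Valid T.unneg (w :: riseHeads T v l) := by
  have compat_zero := TailFn.compat_zero (TailFn.negated_unneg T)
  induction l generalizing v w with
  | nil =>
    obtain ⟨hfin, hcompat⟩ := TailFn.unneg_final_boundary hT h
    refine ⟨?_, hfin⟩
    rcases hw with rfl | rfl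
    exacts [hcompat, compat_zero _]
  | cons x l ih =>
    refine ⟨?_, ih h.2 (TailFn.rise_eq_or_of_compat hT h.1)⟩
    rcases hw with rfl | rfl
    exacts [TailFn.unneg_compat_rise hT h.1, compat_zero _]

theorem length_riseHeads (T : TailFn) (p : HeadFn) (l : List HeadFn) :
    (riseHeads T p l).length = l.length + 1 := by
  induction l generalizing p with
  | nil => rfl
  | cons x l ih => simp [riseHeads, ih]

theorem getD_riseHeads_of_lt (T : TailFn) (p : HeadFn) {l : List HeadFn} {i : ℕ}
    (hi : i < l.length) :
    (riseHeads T p l).getD i .zero = ((p :: l).getD i .zero).rise (l.getD i .zero) := by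
  induction l generalizing p i with
  | nil => simp at hi
  | cons x l ih =>
    cases i with
    | zero => rfl
    | succ i => exact ih x (by simpa using hi)

theorem getD_riseHeads_length (T : TailFn) (p : HeadFn) (l : List HeadFn) :
    (riseHeads T p l).getD l.length .zero = T.boundary ((p :: l).getD l.length .zero) := by
  induction l generalizing p with
  | nil => rfl
  | cons x l ih => exact ih x

theorem riseHeads_not_map_not {T : TailFn} (hT : T.negated = false) {a : HeadFn}
    {l : List HeadFn} (h : Valid T (a :: l)) :
    riseHeads T.not a.not (l.map HeadFn.not) = a :: l := by
  induction l generalizing a with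
  | nil => exact congrArg (· :: []) (TailFn.boundary_not_not_of_final hT h)
  | cons x l ih =>
    simp only [List.map_cons, riseHeads]
    rw [TailFn.not_rise_not_of_compat hT h.1, ih h.2]

namespace NF

theorem eval_mk_of_lt (β : List HeadFn) (T : TailFn) (u : ℕ → Fin 2) {n : ℕ}
    (h : n < β.length) : (mk β T).eval u n = (β.getD n .zero).eval (u 0) :=
  if_pos h

theorem eval_mk_of_length_add (β : List HeadFn) (T : TailFn) (u : ℕ → Fin 2) (m : ℕ)
    {n : ℕ} (h : β.length + m = n) : (mk β T).eval u n = T.eval (u m) (u (m + 1)) := by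
  subst h
  simp [eval]

theorem eval_lmul_zero (d : NF) : autTrans a6Tr a6Out 0 ∘ d.eval = (d.lmul 0).eval := by
  funext u n
  simp only [Function.comp_apply, autTrans_a6_zero_apply]
  cases d with
  | flip b => cases b <;> simp [eval, lmul]
  | mk β T =>
    by_cases h : n < β.length
    · simp [eval, lmul, h, HeadFn.eval_not]
    · simp [eval, lmul, h, TailFn.eval_not]

theorem eval_lmul_flip {q : Fin 3} (hq : q ≠ 0) (b : Bool) :
    autTrans a6Tr a6Out q ∘ (flip b).eval = ((flip b).lmul q).eval := by
  simp only [lmul, if_neg hq]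
  refine autTrans_a6_comp_eq hq (fun u => ?_) (fun u n => ?_)
  · rw [eval_mk_of_lt _ _ _ (by simp), List.getD_cons_zero, HeadFn.eval_out]
    cases b <;> rfl
  · rw [eval_mk_of_length_add _ _ _ n (by simp; omega)]
    cases b <;> simp [eval, TailFn.rise_rev_rev]

theorem eval_lmul_mk_of_not_negated {q : Fin 3} (hq : q ≠ 0) {T : TailFn}
    (hT : T.negated = false) {v : HeadFn} {l : List HeadFn} (hβ : Valid T (v :: l)) :
    autTrans a6Tr a6Out q ∘ (mk (v :: l) T).eval = (mk (v.out q :: l) T).eval := by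
  refine autTrans_a6_comp_eq hq (fun u => ?_) (fun u n => ?_)
  · simp [eval, HeadFn.eval_out]
  rcases lt_or_ge n l.length with hn | hn
  · have hc := hβ.compat_getD (i := n) (by simpa using hn)
    rw [eval_mk_of_lt _ _ _ (by simpa using hn), eval_mk_of_lt _ _ _ (by simp; omega),
      eval_mk_of_lt _ _ _ (by simp; omega), ← HeadFn.eval_rise, TailFn.rise_eq_of_compat hT hc]
    rfl
  obtain ⟨m, rfl⟩ := Nat.exists_eq_add_of_le hn
  rw [eval_mk_of_length_add _ _ _ m (by simp; omega)]
  cases m with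
  | zero =>
    rw [eval_mk_of_lt _ _ _ (by simp), eval_mk_of_length_add _ _ _ 0 (by simp)]
    exact (TailFn.rise_eval_final hT hβ.final_getD _ _).symm
  | succ m =>
    rw [eval_mk_of_length_add _ _ _ m (by simp; omega),
      eval_mk_of_length_add _ _ _ (m + 1) (by simp; omega)]
    exact (TailFn.rise_eval_eval hT _ _ _).symm

theorem eval_lmul_mk_of_negated {q : Fin 3} (hq : q ≠ 0) {T : TailFn}
    (hT : T.negated = true) {v : HeadFn} {l : List HeadFn} (hβ : Valid T (v :: l)) :
    autTrans a6Tr a6Out q ∘ (mk (v :: l) T).eval =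
      (mk (v.out q :: riseHeads T v l) T.unneg).eval := by
  refine autTrans_a6_comp_eq hq (fun u => ?_) (fun u n => ?_)
  · simp [eval, HeadFn.eval_out]
  rcases lt_or_ge n l.length with hn | hn
  · rw [eval_mk_of_lt _ _ _ (by simp [length_riseHeads]; omega),
      eval_mk_of_lt _ _ _ (by simp; omega), eval_mk_of_lt _ _ _ (by simp; omega),
      List.getD_cons_succ, getD_riseHeads_of_lt _ _ hn, HeadFn.eval_rise]
    rfl
  obtain ⟨m, rfl⟩ := Nat.exists_eq_add_of_le hn
  cases m with
  | zero =>
    rw [eval_mk_of_lt _ _ _ (by simp [length_riseHeads]), eval_mk_of_lt _ _ _ (by simp),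
      List.getD_cons_succ, getD_riseHeads_length, eval_mk_of_length_add _ _ _ 0 (by simp)]
    exact (TailFn.rise_eval_final_of_negated hT hβ.final_getD _ _).symm
  | succ m =>
    rw [eval_mk_of_length_add _ _ _ m (by simp [length_riseHeads]; omega),
      eval_mk_of_length_add _ _ _ m (by simp; omega),
      eval_mk_of_length_add _ _ _ (m + 1) (by simp; omega)]
    exact (TailFn.rise_eval_eval_of_negated hT _ _ _).symm

theorem lmul_mk_cons {q : Fin 3} (hq : q ≠ 0) (v : HeadFn) (l : List HeadFn) (T : TailFn) :
    (mk (v :: l) T).lmul q = if T.negated then mk (v.out q :: riseHeads T v l) T.unneg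
      else mk (v.out q :: l) T := by
  simp [lmul, hq]

theorem Admissible.lmul {n : ℕ} {d : NF} (hd : d.Admissible n) (q : Fin 3) :
    (d.lmul q).Admissible (n + 1) := by
  by_cases hq : q = 0
  · subst hq
    cases d with
    | flip b => simpa [NF.lmul, Admissible] using hd
    | mk β T =>
      obtain ⟨hβ, hlen⟩ := hd
      refine ⟨hβ.map_not, ?_⟩
      have := T.cost_not_le
      simp only [List.length_map]
      omega
  cases d with
  | flip b =>
    simp only [NF.lmul, if_neg hq]
    refine ⟨?_, ?_⟩
    · show TailFn.final _ _ = true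
      revert q; cases b <;> decide
    · cases b
      · simp [TailFn.cost]
      · have : n ≠ 0 := by rintro rfl; exact Bool.true_eq_false_eq_False hd
        simp [TailFn.cost]; omega
  | mk β T =>
    obtain ⟨hβ, hlen⟩ := hd
    obtain ⟨v, l, rfl⟩ := List.exists_cons_of_length_pos hβ.length_pos
    rw [lmul_mk_cons hq]
    split
    · next hT =>
      refine ⟨hβ.cons_riseHeads hT (HeadFn.out_eq_or hq v), ?_⟩
      have := TailFn.cost_unneg hT
      simp only [List.length_cons, length_riseHeads] at hlen ⊢
      omega
    · next hT =>
      exact ⟨hβ.cons_of_not_negated (by simpa using hT) (HeadFn.out_eq_or hq v),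
        by simp only [List.length_cons] at hlen ⊢; omega⟩

theorem eval_lmul {n : ℕ} {d : NF} (hd : d.Admissible n) (q : Fin 3) :
    autTrans a6Tr a6Out q ∘ d.eval = (d.lmul q).eval := by
  by_cases hq : q = 0
  · subst hq; exact eval_lmul_zero d
  cases d with
  | flip b => exact eval_lmul_flip hq b
  | mk β T =>
    obtain ⟨v, l, rfl⟩ := List.exists_cons_of_length_pos hd.1.length_pos
    rw [lmul_mk_cons hq]
    split
    · next hT => exact eval_lmul_mk_of_negated hq hT hd.1
    · next hT => exact eval_lmul_mk_of_not_negated hq (by simpa using hT) hd.1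

theorem exists_lmul_flip_eq {T : TailFn} (hT : T.negated = false) {v : HeadFn}
    (h : T.final v = true) : ∃ q : Fin 3, (flip T.cost.bodd).lmul q = mk [v] T := by
  revert T v; decide

theorem exists_lmul_eq_of_tight {n : ℕ} {T : TailFn} (hT : T.negated = false)
    {β : List HeadFn} (hβ : Valid T β) (hlen : 2 * β.length + T.cost = n + 2) :
    ∃ (q : Fin 3) (d : NF), d.Admissible n ∧ d.lmul q = mk β T := by
  match β, hβ with
  | [v], hβ =>
    obtain ⟨q, hq⟩ := exists_lmul_flip_eq hT hβ
    refine ⟨q, _, ?_, hq⟩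
    simp only [List.length_singleton] at hlen
    rw [show n = T.cost by omega]
    rfl
  | a :: b :: l, hβ =>
    obtain ⟨q, hq, hout⟩ := TailFn.exists_out_not_eq_of_compat hT hβ.1
    refine ⟨q, mk ((b :: l).map HeadFn.not) T.not, ⟨hβ.2.map_not, ?_⟩, ?_⟩
    · have := T.cost_not_le
      simp only [List.length_map, List.length_cons] at hlen ⊢
      omega
    · rw [List.map_cons, lmul_mk_cons hq, if_pos (by rw [T.negated_not, hT]; rfl),
        riseHeads_not_map_not hT hβ.2, hout, TailFn.unneg_not hT]

theorem Admissible.exists_lmul_eq {n : ℕ} {d : NF} (hd : d.Admissible (n + 1)) :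
    ∃ (q : Fin 3) (d' : NF), d'.Admissible n ∧ d'.lmul q = d := by
  cases d with
  | flip b =>
    refine ⟨0, flip n.bodd, rfl, ?_⟩
    rw [hd, Nat.bodd_succ]
    rfl
  | mk β T =>
    obtain ⟨hβ, hlen⟩ := hd
    cases hT : T.negated
    · by_cases hsmall : 2 * β.length + T.cost ≤ n + 1
      · obtain ⟨v, l, rfl⟩ := List.exists_cons_of_length_pos hβ.length_pos
        refine ⟨1, mk (v :: l) T, ⟨hβ, hsmall⟩, ?_⟩
        rw [lmul_mk_cons one_ne_zero, hT, if_neg Bool.false_ne_true, HeadFn.out_one]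
      · exact exists_lmul_eq_of_tight hT hβ (by omega)
    · refine ⟨0, mk (β.map HeadFn.not) T.not, ⟨hβ.map_not, ?_⟩, ?_⟩
      · have := TailFn.cost_not_of_negated hT
        simp only [List.length_map]
        omega
      · show mk ((β.map HeadFn.not).map HeadFn.not) T.not.not = mk β T
        rw [List.map_map, HeadFn.not_involutive.comp_self, List.map_id, TailFn.not_not]

def testWord (i : ℕ) (x y : Fin 2) : ℕ → Fin 2 := fun m => if m = i then y else x

theorem length_le_of_eval_mk_eq {β β' : List HeadFn} {T T' : TailFn}
    (h : (mk β T).eval = (mk β' T').eval) : β'.length ≤ β.length := by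
  by_contra hlt
  obtain ⟨j, hj⟩ := Nat.exists_eq_add_of_lt (not_le.mp hlt)
  obtain ⟨x, hx⟩ := T.exists_eval_ne_right
  have key : ∀ y, T.eval x y = T'.eval x x := fun y => by
    have := congrFun (congrFun h (testWord (j + 2) x y)) β'.length
    rw [eval_mk_of_length_add _ _ _ (j + 1) (by omega),
      eval_mk_of_length_add _ _ _ 0 (by simp)] at this
    simpa [testWord] using this
  exact hx ((key 0).trans (key 1).symm)

theorem eq_of_eval_mk_eq {β β' : List HeadFn} {T T' : TailFn}
    (h : (mk β T).eval = (mk β' T').eval) : mk β T = mk β' T' := by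
  have hlen : β.length = β'.length :=
    le_antisymm (length_le_of_eval_mk_eq h.symm) (length_le_of_eval_mk_eq h)
  have hT : T = T' := TailFn.eval_injective <| funext₂ fun x y => by
    have := congrFun (congrFun h (testWord 1 x y)) β.length
    rw [eval_mk_of_length_add _ _ _ 0 (by simp), eval_mk_of_length_add _ _ _ 0 (by simp [hlen])]
      at this
    simpa [testWord] using this
  have hβ : β = β' := List.ext_getElem hlen fun i hi hi' =>
    HeadFn.eval_injective <| funext fun x => by
      have := congrFun (congrFun h fun _ => x) i
      rwa [eval_mk_of_lt _ _ _ hi, eval_mk_of_lt _ _ _ hi', List.getD_eq_getElem _ _ hi,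
        List.getD_eq_getElem _ _ hi'] at this
  rw [hβ, hT]

theorem eval_flip_ne_eval_mk (b : Bool) (β : List HeadFn) (T : TailFn) :
    (flip b).eval ≠ (mk β T).eval := by
  intro h
  have at_length : ∀ u, (flip b).eval u β.length = T.eval (u 0) (u 1) := fun u => by
    rw [h, eval_mk_of_length_add _ _ _ 0 (by simp)]
  by_cases hk : β.length = 1
  · obtain ⟨y, hy⟩ := T.exists_eval_ne_left
    have key : ∀ x, T.eval x y = (flip b).eval (fun _ => y) 1 := fun x => by
      simpa [testWord, hk, eval] using (at_length (testWord 0 y x)).symm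
    exact hy ((key 0).trans (key 1).symm)
  · obtain ⟨x, hx⟩ := T.exists_eval_ne_right
    have key : ∀ y, T.eval x y = (flip b).eval (fun _ => x) 0 := fun y => by
      simpa [testWord, hk, eval] using (at_length (testWord 1 x y)).symm
    exact hx ((key 0).trans (key 1).symm)

theorem eval_injective : Function.Injective NF.eval := by
  rintro (b | ⟨β, T⟩) (b' | ⟨β', T'⟩) h
  · have := congrFun (congrFun h fun _ => 0) 0
    cases b <;> cases b' <;> simp_all [eval]
  · exact absurd h (eval_flip_ne_eval_mk b β' T')
  · exact absurd h.symm (eval_flip_ne_eval_mk b' β T)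
  · exact eq_of_eval_mk_eq h

end NF

theorem admissible_nf : ∀ w : List (Fin 3), (nf w).Admissible w.length
  | [] => rfl
  | q :: w => (admissible_nf w).lmul q

theorem wordTrans_eq_eval_nf : ∀ w : List (Fin 3), wordTrans a6Tr a6Out w = (nf w).eval
  | [] => rfl
  | q :: w => by
    change autTrans a6Tr a6Out q ∘ wordTrans a6Tr a6Out w = ((nf w).lmul q).eval
    rw [wordTrans_eq_eval_nf w, NF.eval_lmul (admissible_nf w) q]

theorem NF.Admissible.exists_nf_eq {n : ℕ} {d : NF} (hd : d.Admissible n) :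
    ∃ w, w.length = n ∧ nf w = d := by
  induction n generalizing d with
  | zero =>
    cases d with
    | flip b => exact ⟨[], rfl, by rw [show b = false from hd]; rfl⟩
    | mk β T => have := hd.1.length_pos; have := hd.2; omega
  | succ n ih =>
    obtain ⟨q, d', hd', rfl⟩ := hd.exists_lmul_eq
    obtain ⟨w, rfl, rfl⟩ := ih hd'
    exact ⟨q :: w, rfl, rfl⟩

def validAfter (T : TailFn) : ℕ → HeadFn → Finset (List HeadFn)
  | 0, v => if T.final v then {[]} else ∅
  | k + 1, v => (univ.filter (T.compat v ·)).biUnion fun w =>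
      (validAfter T k w).map ⟨(w :: ·), List.cons_injective⟩

theorem mem_validAfter {T : TailFn} {k : ℕ} {v : HeadFn} {t : List HeadFn} :
    t ∈ validAfter T k v ↔ t.length = k ∧ Valid T (v :: t) := by
  induction k generalizing v t with
  | zero =>
    cases t with
    | nil => by_cases h : T.final v <;> simp [validAfter, h]
    | cons => by_cases h : T.final v <;> simp [validAfter, h]
  | succ k ih =>
    cases t with
    | nil => simp [validAfter]
    | cons w s => simp [validAfter, ih, and_left_comm]

theorem card_validAfter_succ (T : TailFn) (k : ℕ) (v : HeadFn) :
    (validAfter T (k + 1) v).card =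
      ∑ w ∈ univ.filter (T.compat v ·), (validAfter T k w).card := by
  rw [validAfter, card_biUnion]
  · simp only [card_map]
  · intro w₁ _ w₂ _ hne
    simp only [Function.onFun, disjoint_left, mem_map, Function.Embedding.coeFn_mk]
    rintro _ ⟨s₁, -, rfl⟩ ⟨s₂, -, h⟩
    exact hne (List.cons_eq_cons.mp h).1.symm

theorem valid_absorbing_cons_iff {T : TailFn} {t : List HeadFn} (ht : t ≠ []) :
    Valid T (T.absorbing :: t) ↔ Valid T t := by
  obtain ⟨w, s, rfl⟩ := List.exists_cons_of_ne_nil ht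
  simp [T.compat_absorbing]

theorem card_validAfter_succ_absorbing (T : TailFn) (k : ℕ) :
    (validAfter T (k + 1) T.absorbing).card = ∑ w, (validAfter T k w).card := by
  simp [card_validAfter_succ, T.compat_absorbing]

theorem card_validAfter_succ_of_ne {T : TailFn} (k : ℕ) {v : HeadFn} (hv : v ≠ T.absorbing) :
    (validAfter T (k + 1) v).card = (validAfter T k v.not).card := by
  rw [card_validAfter_succ, TailFn.filter_compat_of_ne hv, sum_singleton]

theorem card_validAfter_fib (T : TailFn) (k : ℕ) :
    (validAfter T k T.absorbing).card + 1 = Phi (k + 2) ∧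
      (validAfter T k T.absorbing.not).card + 1 = Phi (k + 1) ∧
      (validAfter T k .pos).card + (validAfter T k .neg).card = 1 := by
  induction k with
  | zero => cases T <;> decide
  | succ k ih =>
    obtain ⟨hA, hB, hpn⟩ := ih
    have hpos : HeadFn.pos ≠ T.absorbing := by cases T <;> decide
    have hneg : HeadFn.neg ≠ T.absorbing := by cases T <;> decide
    have hB' : T.absorbing.not ≠ T.absorbing := by cases T <;> decide
    have hsum : ∑ w, (validAfter T k w).card = (validAfter T k T.absorbing).card +
        (validAfter T k T.absorbing.not).card + 1 := by
      rw [HeadFn.sum_univ]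
      rcases T.absorbing_eq_or with h | h <;> rw [h]
      · rw [show HeadFn.zero.not = .one from rfl]; omega
      · rw [show HeadFn.one.not = .zero from rfl]; omega
    refine ⟨?_, ?_, ?_⟩
    · have hPhi : Phi (k + 1 + 2) = Phi (k + 2) + Phi (k + 1) := rfl
      rw [card_validAfter_succ_absorbing, hsum]
      omega
    · rw [card_validAfter_succ_of_ne _ hB', HeadFn.not_involutive]
      exact hA
    · rw [card_validAfter_succ_of_ne _ hpos, card_validAfter_succ_of_ne _ hneg]
      rw [show HeadFn.pos.not = .neg from rfl, show HeadFn.neg.not = .pos from rfl]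
      omega

theorem sum_card_validAfter (T : TailFn) (m : ℕ) :
    ∑ k ∈ Icc 1 m, (validAfter T k T.absorbing).card + m + 5 = Phi (m + 4) := by
  induction m with
  | zero => rfl
  | succ m ih =>
    rw [sum_Icc_succ_top (by omega)]
    have hPhi : Phi (m + 1 + 4) = Phi (m + 4) + Phi (m + 1 + 2) := rfl
    have := (card_validAfter_fib T (m + 1)).1
    omega

-- `validAfter T k T.absorbing` consists of the valid heads of length `k ≥ 1`, since the
-- absorbing letter is compatible with every letter (`valid_absorbing_cons_iff`).
def admissibleForms (n : ℕ) : Finset NF :=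
  insert (.flip n.bodd) <| univ.biUnion fun T => (Icc 1 (T.maxHead n)).biUnion fun k =>
    (validAfter T k T.absorbing).image (NF.mk · T)

theorem mem_admissibleForms {n : ℕ} {d : NF} : d ∈ admissibleForms n ↔ d.Admissible n := by
  cases d with
  | flip b => simp [admissibleForms, NF.Admissible]
  | mk β T =>
    simp only [admissibleForms, mem_insert, reduceCtorEq, false_or, mem_biUnion, mem_univ, true_and,
      mem_Icc, mem_image, NF.mk.injEq, mem_validAfter]
    constructor
    · rintro ⟨T, k, ⟨hk1, hk2⟩, t, ⟨rfl, ht⟩, rfl, rfl⟩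
      refine ⟨(valid_absorbing_cons_iff (List.ne_nil_of_length_pos hk1)).mp ht, ?_⟩
      unfold TailFn.maxHead at hk2
      omega
    · rintro ⟨hβ, hlen⟩
      refine ⟨T, β.length, ⟨hβ.length_pos, ?_⟩, β,
        ⟨rfl, (valid_absorbing_cons_iff (List.ne_nil_of_length_pos hβ.length_pos)).mpr hβ⟩,
        rfl, rfl⟩
      unfold TailFn.maxHead
      omega

theorem card_admissibleForms (n : ℕ) : (admissibleForms n).card =
    1 + ∑ T, ∑ k ∈ Icc 1 (T.maxHead n), (validAfter T k T.absorbing).card := by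
  rw [admissibleForms, card_insert_of_notMem (by simp), add_comm, card_biUnion]
  · congr 1
    refine sum_congr rfl fun T _ => ?_
    rw [card_biUnion]
    · exact sum_congr rfl fun k _ => card_image_of_injective _ fun _ _ h => (NF.mk.inj h).1
    · intro k₁ _ k₂ _ hne
      simp only [Function.onFun, disjoint_left, mem_image, mem_validAfter]
      rintro _ ⟨t₁, ⟨h₁, -⟩, rfl⟩ ⟨t₂, ⟨h₂, -⟩, h⟩
      exact hne (h₁ ▸ h₂ ▸ congrArg List.length (NF.mk.inj h).1.symm)
  · intro T₁ _ T₂ _ hne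
    simp only [Function.onFun, disjoint_left, mem_biUnion, mem_image]
    rintro _ ⟨_, -, t₁, -, rfl⟩ ⟨_, -, t₂, -, h⟩
    exact hne (NF.mk.inj h).2.symm

theorem growth_a6_eq_card_admissibleForms (n : ℕ) :
    growth a6Tr a6Out n = (admissibleForms n).card := by
  have himage : {g | ∃ w : List (Fin 3), w.length = n ∧ wordTrans a6Tr a6Out w = g} =
      NF.eval '' (admissibleForms n : Set NF) := by
    ext g
    simp only [Set.mem_ofPred_eq, Set.mem_image, mem_coe, mem_admissibleForms]
    constructor
    · rintro ⟨w, rfl, rfl⟩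
      exact ⟨nf w, admissible_nf w, (wordTrans_eq_eval_nf w).symm⟩
    · rintro ⟨d, hd, rfl⟩
      obtain ⟨w, hw, rfl⟩ := hd.exists_nf_eq
      exact ⟨w, hw, wordTrans_eq_eval_nf w⟩
  rw [growth, himage, NF.eval_injective.injOn.ncard_image, Set.ncard_coe_finset]

theorem growth_a6_add_sum (n : ℕ) : growth a6Tr a6Out n + ∑ T : TailFn, (T.maxHead n + 5) =
    1 + ∑ T : TailFn, Phi (T.maxHead n + 4) := by
  have hPhi (T : TailFn) : Phi (T.maxHead n + 4) =
      ∑ k ∈ Icc 1 (T.maxHead n), (validAfter T k T.absorbing).card + (T.maxHead n + 5) := by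
    rw [← sum_card_validAfter, add_assoc]
  rw [growth_a6_eq_card_admissibleForms, card_admissibleForms, sum_congr rfl fun T _ => hPhi T]
  simp only [sum_add_distrib]
  ring

theorem growth_a6_even (j : ℕ) :
    growth a6Tr a6Out (2 * j + 2) + 4 * j + 22 = Phi (j + 7) + Phi (j + 5) := by
  have hmax (T : TailFn) : T.maxHead (2 * j + 2) = if T = .notFall then j else j + 1 := by
    cases T <;> simp [TailFn.maxHead, TailFn.cost] <;> omega
  have key := growth_a6_add_sum (2 * j + 2)
  simp only [TailFn.sum_univ, hmax, reduceCtorEq, if_false, if_true] at key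
  have h7 : Phi (j + 7) = Phi (j + 6) + Phi (j + 5) := rfl
  have h6 : Phi (j + 6) = Phi (j + 5) + Phi (j + 4) := rfl
  have h5 : Phi (j + 1 + 4) = Phi (j + 5) := rfl
  omega

theorem growth_a6_odd (j : ℕ) :
    growth a6Tr a6Out (2 * j + 1) + 4 * j + 20 = Phi (j + 6) + 2 * Phi (j + 4) := by
  have hmax (T : TailFn) : T.maxHead (2 * j + 1) = if T = .rise then j + 1 else j := by
    cases T <;> simp [TailFn.maxHead, TailFn.cost] <;> omega
  have key := growth_a6_add_sum (2 * j + 1)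
  simp only [TailFn.sum_univ, hmax, reduceCtorEq, if_false, if_true] at key
  have h6 : Phi (j + 6) = Phi (j + 5) + Phi (j + 4) := rfl
  have h5 : Phi (j + 1 + 4) = Phi (j + 5) := rfl
  omega

end A6

/-- The growth function `γ` of the automaton `A₆` is given by Fibonacci numbers: for every
`n ≥ 1`, if `n` is even then `γ(n) = Φ_{⌊n/2⌋+6} + Φ_{⌊n/2⌋+4} − 2n − 18`, and if `n` is
odd then `γ(n) = Φ_{⌊n/2⌋+6} + 2·Φ_{⌊n/2⌋+4} − 2n − 18` (stated additively in `ℕ`);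
in particular `γ` has exponential growth order. -/
theorem growth_a6 (n : ℕ) (hn : 1 ≤ n) :
    (Even n →
      growth a6Tr a6Out n + 2 * n + 18 = Phi (n / 2 + 6) + Phi (n / 2 + 4)) ∧
    (Odd n →
      growth a6Tr a6Out n + 2 * n + 18 = Phi (n / 2 + 6) + 2 * Phi (n / 2 + 4)) := by
  refine ⟨fun ⟨m, hm⟩ => ?_, fun ⟨j, hj⟩ => ?_⟩
  · obtain ⟨j, rfl⟩ : ∃ j, n = 2 * j + 2 := ⟨m - 1, by omega⟩
    rw [show (2 * j + 2) / 2 + 6 = j + 7 by omega, show (2 * j + 2) / 2 + 4 = j + 5 by omega,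
      ← A6.growth_a6_even]
    ring
  · subst hj
    rw [show (2 * j + 1) / 2 = j by omega, ← A6.growth_a6_odd]
    ring
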